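/- Let $\mathfrak{g}$ be a finite-dimensional real Lie algebra, $\mathfrak{h}\subset\mathfrak{g}$ a subalgebra, $\lambda$ a character of $\mathfrak{h}$, and $\mathfrak{g}_T=\mathfrak{g}\oplus\mathbb{R}T$ with $T$ central, $\mathfrak{h}^T_\lambda$-ideal generated by $\{X+\lambda(X)T: X\in\mathfrak{h}\}$. If $u_T \in (U(\mathfrak{g}_T)/U(\mathfrak{g}_T)\mathfrak{h}^T_\lambda)^{\mathfrak{h}}$, then the family $t\mapsto u_t := e_{(T=t)}(u_T) \in (U(\mathfrak{g})/U(\mathfrak{g})\mathfrak{h}_{t\lambda})^{\mathfrak{h}}$ is polynomial in $t$, in the sense that under the PBW identifications $(U(\mathfrak{g})/U(\mathfrak{g})\mathfrak{h}_{t\lambda}) \simeq S(\mathfrak{q})$ (for a fixed complement $\mathfrak{q}$ of $\mathfrak{h}$), the coefficients of $u_t$ are polynomial functions of $t$. -/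

import Mathlib

open UniversalEnvelopingAlgebra

noncomputable section

instance gTLieRing (g : Type*) [LieRing g] : LieRing (g × ℝ) where
  bracket x y := (⁅x.1, y.1⁆, 0)
  add_lie x y z := by
    show (⁅x.1 + y.1, z.1⁆, (0 : ℝ)) = (⁅x.1, z.1⁆, (0 : ℝ)) + (⁅y.1, z.1⁆, (0 : ℝ))
    simp [add_lie, Prod.ext_iff]
  lie_add x y z := by
    show (⁅x.1, y.1 + z.1⁆, (0 : ℝ)) = (⁅x.1, y.1⁆, (0 : ℝ)) + (⁅x.1, z.1⁆, (0 : ℝ))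
    simp [lie_add, Prod.ext_iff]
  lie_self x := by
    show (⁅x.1, x.1⁆, (0 : ℝ)) = 0
    simp [Prod.ext_iff]
  leibniz_lie x y z := by
    show (⁅x.1, ⁅y.1, z.1⁆⁆, (0 : ℝ)) =
      (⁅(⁅x.1, y.1⁆, (0 : ℝ)).1, z.1⁆, (0 : ℝ)) + (⁅y.1, ⁅x.1, z.1⁆⁆, (0 : ℝ))
    rw [Prod.mk_add_mk, Prod.mk.injEq]
    exact ⟨leibniz_lie x.1 y.1 z.1, (add_zero 0).symm⟩

instance gTLieAlgebra (g : Type*) [LieRing g] [LieAlgebra ℝ g] : LieAlgebra ℝ (g × ℝ) where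
  lie_smul t x y := by
    show (⁅x.1, t • y.1⁆, (0 : ℝ)) = t • (⁅x.1, y.1⁆, (0 : ℝ))
    simp [Prod.ext_iff]

/-- The left ideal `U(g_T)h^T_λ` generated by `{X + λ(X)T : X ∈ h}`. -/
def envIdealT (g : Type*) [LieRing g] [LieAlgebra ℝ g]
    (h : LieSubalgebra ℝ g) (lam : h →ₗ[ℝ] ℝ) :
    Ideal (UniversalEnvelopingAlgebra ℝ (g × ℝ)) :=
  Ideal.span {a | ∃ X : h, a = ι ℝ (((X : g), 0) : g × ℝ) + lam X • ι ℝ ((0, 1) : g × ℝ)}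

/-- The left ideal `U(g)h_{tλ}` generated by `{X + tλ(X) : X ∈ h}`. -/
def envIdealt (g : Type*) [LieRing g] [LieAlgebra ℝ g]
    (h : LieSubalgebra ℝ g) (lam : h →ₗ[ℝ] ℝ) (t : ℝ) :
    Ideal (UniversalEnvelopingAlgebra ℝ g) :=
  Ideal.span {a | ∃ X : h,
    a = ι ℝ (X : g) + algebraMap ℝ (UniversalEnvelopingAlgebra ℝ g) (t * lam X)}

def monList {g : Type*} [LieRing g] [LieAlgebra ℝ g] {q : Submodule ℝ g} {m : ℕ}
    (bq : Module.Basis (Fin m) ℝ q) (d : Fin m →₀ ℕ) : List (UniversalEnvelopingAlgebra ℝ g) :=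
  (List.finRange m).flatMap fun i => List.replicate (d i) (ι ℝ ((bq i : q) : g))

/-- The symmetrization map `β : S(q) → U(g)`. -/
def symmBeta {g : Type*} [LieRing g] [LieAlgebra ℝ g] {q : Submodule ℝ g} {m : ℕ}
    (bq : Module.Basis (Fin m) ℝ q) :
    MvPolynomial (Fin m) ℝ →ₗ[ℝ] UniversalEnvelopingAlgebra ℝ g :=
  (MvPolynomial.basisMonomials (Fin m) ℝ).constr ℝ fun d =>
    (((monList bq d).length.factorial : ℝ)⁻¹) •
      (((monList bq d).permutations).map List.prod).sum

/-!
The image of `u_T` under `U(g_T) → U(g)[T]`, `(x, s) ↦ ι x + sT`, is a polynomial `∑ T ^ j a_j`,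
and `u_t = ∑ t ^ j a_j`. It therefore suffices that every `a ∈ U(g)` is congruent modulo
`U(g)h_{tλ}` to `β(c(t))` for one `c` whose coefficients are polynomials in `t`. This goes by
induction along the PBW filtration: modulo shorter words, a word with letters in `h ∪ q` either
ends in a letter `x ∈ h`, and then it is `≡ -tλ(x)` times a shorter word, or it lies in `q` and
agrees with its symmetrization.
-/

namespace UniversalEnvelopingAlgebra

attribute [local instance] LieRing.ofAssociativeRing

variable {R : Type*} [CommRing R] {L : Type*} [LieRing L] [LieAlgebra R L]

variable (R) in
def wordProd (w : List L) : UniversalEnvelopingAlgebra R L :=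
  (w.map (ι R)).prod

@[simp]
lemma wordProd_nil : wordProd R ([] : List L) = 1 := rfl

@[simp]
lemma wordProd_cons (x : L) (w : List L) : wordProd R (x :: w) = ι R x * wordProd R w := by
  simp [wordProd]

lemma wordProd_append (v w : List L) : wordProd R (v ++ w) = wordProd R v * wordProd R w := by
  simp [wordProd]

variable (R L) in
/-- The `(n-1)`-st piece of the PBW filtration. -/
def degreeLT (n : ℕ) : Submodule R (UniversalEnvelopingAlgebra R L) :=
  Submodule.span R {a | ∃ w : List L, w.length < n ∧ a = wordProd R w}

lemma wordProd_mem_degreeLT {w : List L} {n : ℕ} (hw : w.length < n) :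
    wordProd R w ∈ degreeLT R L n :=
  Submodule.subset_span ⟨w, hw, rfl⟩

lemma degreeLT_mono {k n : ℕ} (hkn : k ≤ n) : degreeLT R L k ≤ degreeLT R L n :=
  Submodule.span_mono fun _ ⟨w, hw, ha⟩ => ⟨w, hw.trans_le hkn, ha⟩

lemma ι_mul_mem_degreeLT (x : L) {n : ℕ} {a : UniversalEnvelopingAlgebra R L}
    (ha : a ∈ degreeLT R L n) : ι R x * a ∈ degreeLT R L (n + 1) := by
  induction ha using Submodule.span_induction with
  | mem a ha =>
    obtain ⟨w, hw, rfl⟩ := ha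
    rw [← wordProd_cons]
    exact wordProd_mem_degreeLT (by simpa using hw)
  | zero => simp
  | add a b _ _ ha hb => rw [mul_add]; exact add_mem ha hb
  | smul r a _ ha => rw [mul_smul_comm]; exact Submodule.smul_mem _ r ha

lemma wordProd_sub_mem_degreeLT_of_perm {v w : List L} (hvw : v.Perm w) :
    wordProd R v - wordProd R w ∈ degreeLT R L v.length := by
  induction hvw with
  | nil => simp
  | cons x _ ih =>
    simpa [mul_sub] using ι_mul_mem_degreeLT x ih
  | swap x y w =>
    have hlie : wordProd R (y :: x :: w) - wordProd R (x :: y :: w) = wordProd R (⁅y, x⁆ :: w) := by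
      simp only [wordProd_cons, LieHom.map_lie, Ring.lie_def]
      noncomm_ring
    rw [hlie]
    exact wordProd_mem_degreeLT (by simp)
  | trans h₁₂ _ ih₁₂ ih₂₃ =>
    rw [← sub_add_sub_cancel]
    exact add_mem ih₁₂ (h₁₂.length_eq ▸ ih₂₃)

lemma span_range_wordProd : Submodule.span R (Set.range (wordProd R (L := L))) = ⊤ := by
  refine Submodule.eq_top_iff'.mpr fun a => ?_
  obtain ⟨a, rfl⟩ := RingCon.mkₐ_surjective (α := R) _ a
  induction a using TensorAlgebra.induction with
  | algebraMap r =>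
    rw [AlgHom.commutes, Algebra.algebraMap_eq_smul_one]
    exact Submodule.smul_mem _ r (Submodule.subset_span ⟨[], rfl⟩)
  | ι x => exact Submodule.subset_span ⟨[x], by rw [wordProd_cons, wordProd_nil, mul_one]; rfl⟩
  | mul a b ha hb =>
    rw [map_mul]
    have hab := Submodule.mul_mem_mul ha hb
    rw [Submodule.span_mul_span] at hab
    refine Submodule.span_mono ?_ hab
    rintro _ ⟨_, ⟨v, rfl⟩, _, ⟨w, rfl⟩, rfl⟩
    exact ⟨v ++ w, wordProd_append v w⟩
  | add a b ha hb => rw [map_add]; exact add_mem ha hb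

lemma wordProd_mem_span_of_span_eq_top {G : Set L} (hG : Submodule.span R G = ⊤) (w : List L) :
    wordProd R w ∈ Submodule.span R
      {a | ∃ v : List L, v.length = w.length ∧ (∀ x ∈ v, x ∈ G) ∧ a = wordProd R v} := by
  induction w with
  | nil => exact Submodule.subset_span ⟨[], rfl, by simp, rfl⟩
  | cons x w ih =>
    have hx : ι R x ∈ Submodule.span R ((ι R).toLinearMap '' G) := by
      rw [Submodule.span_image, hG]
      exact ⟨x, trivial, rfl⟩
    rw [wordProd_cons]
    have hxw := Submodule.mul_mem_mul hx ih
    rw [Submodule.span_mul_span] at hxw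
    refine Submodule.span_mono ?_ hxw
    rintro _ ⟨_, ⟨y, hy, rfl⟩, _, ⟨v, hv, hvG, rfl⟩, rfl⟩
    exact ⟨y :: v, by simp [hv], by simpa [hy] using hvG, (wordProd_cons y v).symm⟩

end UniversalEnvelopingAlgebra

section Symmetrization

variable {g : Type*} [LieRing g] [LieAlgebra ℝ g] {q : Submodule ℝ g} {m : ℕ}
  (bq : Module.Basis (Fin m) ℝ q)

def indexList (d : Fin m →₀ ℕ) : List (Fin m) :=
  (List.finRange m).flatMap fun i => List.replicate (d i) i

lemma indexList_toFinsupp_perm (w : List (Fin m)) :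
    (indexList (Multiset.toFinsupp (w : Multiset (Fin m)))).Perm w := by
  classical
  refine List.perm_iff_count.mpr fun j => ?_
  simp [indexList, List.count_flatMap, List.count_replicate, Function.comp_def,
    ← Fin.sum_univ_def]

lemma monList_eq_map (d : Fin m →₀ ℕ) :
    monList bq d = ((indexList d).map fun i => (bq i : g)).map (ι ℝ) := by
  simp [monList, indexList, List.map_flatMap, List.map_replicate]

lemma symmBeta_monomial_one (d : Fin m →₀ ℕ) :
    symmBeta bq (MvPolynomial.monomial d 1) =
      (((monList bq d).length.factorial : ℝ)⁻¹) •
        (((monList bq d).permutations).map List.prod).sum := by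
  have hb : MvPolynomial.monomial d (1 : ℝ) = MvPolynomial.basisMonomials (Fin m) ℝ d := by
    rw [MvPolynomial.coe_basisMonomials]
  rw [hb, symmBeta, Module.Basis.constr_basis]

lemma wordProd_sub_symmBeta_mem_degreeLT (w : List (Fin m)) :
    wordProd ℝ (w.map fun i => (bq i : g)) -
        symmBeta bq (MvPolynomial.monomial (Multiset.toFinsupp (w : Multiset (Fin m))) 1) ∈
      degreeLT ℝ g w.length := by
  set u := w.map fun i => (bq i : g)
  set d := Multiset.toFinsupp (w : Multiset (Fin m))
  set v := (indexList d).map fun i => (bq i : g)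
  have hv : v.Perm u := (indexList_toFinsupp_perm w).map _
  have hN : ((v.length.factorial : ℕ) : ℝ) ≠ 0 := by positivity
  have hβ : symmBeta bq (MvPolynomial.monomial d 1) =
      ((v.length.factorial : ℝ)⁻¹) • (v.permutations.map (wordProd ℝ)).sum := by
    rw [symmBeta_monomial_one, monList_eq_map, ← List.map_permutations]
    simp only [v, List.length_map, List.map_map]
    rfl
  have hsum : wordProd ℝ u - symmBeta bq (MvPolynomial.monomial d 1) =
      ((v.length.factorial : ℝ)⁻¹) •
        (v.permutations.map fun P => wordProd ℝ u - wordProd ℝ P).sum := by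
    simp only [hβ, ← Multiset.sum_coe, ← Multiset.map_coe, Multiset.sum_map_sub]
    rw [smul_sub, Multiset.map_const', Multiset.sum_replicate, Multiset.coe_card,
      List.length_permutations, ← Nat.cast_smul_eq_nsmul ℝ, smul_smul, inv_mul_cancel₀ hN,
      one_smul]
  rw [hsum]
  refine Submodule.smul_mem _ _ (list_sum_mem fun a ha => ?_)
  obtain ⟨P, hP, rfl⟩ := List.mem_map.mp ha
  simpa [u] using wordProd_sub_mem_degreeLT_of_perm (R := ℝ)
    (hv.symm.trans (List.mem_permutations.mp hP).symm)

end Symmetrization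

section PolyReducible

open Polynomial

variable {g : Type*} [LieRing g] [LieAlgebra ℝ g] (h : LieSubalgebra ℝ g) (lam : h →ₗ[ℝ] ℝ)
  {q : Submodule ℝ g} {m : ℕ} (bq : Module.Basis (Fin m) ℝ q)

lemma symmBeta_map_C_mul (p : ℝ[X]) (c : MvPolynomial (Fin m) ℝ[X]) (t : ℝ) :
    symmBeta bq (MvPolynomial.map (evalRingHom t) (MvPolynomial.C p * c)) =
      p.eval t • symmBeta bq (MvPolynomial.map (evalRingHom t) c) := by
  rw [map_mul, MvPolynomial.map_C, MvPolynomial.C_mul', map_smul, coe_evalRingHom]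

lemma sum_monomial_eval_eq_map {σ : Type*} (c : MvPolynomial σ ℝ[X]) (t : ℝ) :
    ((AddMonoidAlgebra.coeff c).sum fun d p => MvPolynomial.monomial d (p.eval t)) =
      MvPolynomial.map (evalRingHom t) c := by
  classical
  ext n
  simp only [MvPolynomial.coeff_map, Finsupp.sum, MvPolynomial.coeff_sum,
    MvPolynomial.coeff_monomial, Finset.sum_ite_eq']
  split_ifs with hn
  · rfl
  · rw [MvPolynomial.coeff, Finsupp.notMem_support_iff.mp hn, map_zero]

def polyReducibleFamilies : Submodule ℝ (ℝ → UniversalEnvelopingAlgebra ℝ g) where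
  carrier := {f | ∃ c : MvPolynomial (Fin m) ℝ[X], ∀ t,
    f t - symmBeta bq (MvPolynomial.map (evalRingHom t) c) ∈ envIdealt g h lam t}
  add_mem' := by
    rintro f₁ f₂ ⟨c₁, hc₁⟩ ⟨c₂, hc₂⟩
    refine ⟨c₁ + c₂, fun t => ?_⟩
    rw [map_add, map_add, Pi.add_apply, add_sub_add_comm]
    exact add_mem (hc₁ t) (hc₂ t)
  zero_mem' := ⟨0, fun t => by simp⟩
  smul_mem' := by
    rintro r f ⟨c, hc⟩
    refine ⟨MvPolynomial.C (C r) * c, fun t => ?_⟩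
    rw [symmBeta_map_C_mul, eval_C, Pi.smul_apply, ← smul_sub]
    exact Submodule.smul_of_tower_mem _ r (hc t)

variable {h lam bq}

lemma polynomial_smul_mem_polyReducibleFamilies (p : ℝ[X]) {f : ℝ → UniversalEnvelopingAlgebra ℝ g}
    (hf : f ∈ polyReducibleFamilies h lam bq) :
    (fun t => p.eval t • f t) ∈ polyReducibleFamilies h lam bq := by
  obtain ⟨c, hc⟩ := hf
  refine ⟨MvPolynomial.C p * c, fun t => ?_⟩
  rw [symmBeta_map_C_mul, ← smul_sub]
  exact Submodule.smul_of_tower_mem _ _ (hc t)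

lemma mem_polyReducibleFamilies_of_forall_mem {f : ℝ → UniversalEnvelopingAlgebra ℝ g}
    (hf : ∀ t, f t ∈ envIdealt g h lam t) : f ∈ polyReducibleFamilies h lam bq :=
  ⟨0, fun t => by simpa using hf t⟩

lemma const_symmBeta_mem_polyReducibleFamilies (x : MvPolynomial (Fin m) ℝ) :
    (fun _ => symmBeta bq x) ∈ polyReducibleFamilies h lam bq := by
  refine ⟨MvPolynomial.map C x, fun t => ?_⟩
  rw [MvPolynomial.map_map, show (evalRingHom t).comp C = RingHom.id ℝ by ext; simp,
    MvPolynomial.map_id, sub_self]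
  exact zero_mem _

variable (h lam bq) in
def polyReducible : Submodule ℝ (UniversalEnvelopingAlgebra ℝ g) :=
  (polyReducibleFamilies h lam bq).comap (LinearMap.pi fun _ => LinearMap.id)

lemma mem_polyReducible {a : UniversalEnvelopingAlgebra ℝ g} :
    a ∈ polyReducible h lam bq ↔ (fun _ => a) ∈ polyReducibleFamilies h lam bq :=
  Iff.rfl

lemma mul_ι_mem_polyReducible {a : UniversalEnvelopingAlgebra ℝ g}
    (ha : a ∈ polyReducible h lam bq) (x : h) : a * ι ℝ (x : g) ∈ polyReducible h lam bq := by
  -- modulo `U(g)h_{tλ}`, right multiplication by `x` acts on `a` as the scalar `-tλ(x)`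
  have hgen : ∀ t, a * (ι ℝ (x : g) + algebraMap ℝ _ (t * lam x)) ∈ envIdealt g h lam t :=
    fun t => Ideal.mul_mem_left _ a (Ideal.subset_span ⟨x, rfl⟩)
  have hshift := polynomial_smul_mem_polyReducibleFamilies (C (-lam x) * X)
    (mem_polyReducible.mp ha)
  refine mem_polyReducible.mpr ?_
  convert add_mem (mem_polyReducibleFamilies_of_forall_mem hgen) hshift using 1
  ext t
  rw [Pi.add_apply, eval_mul, eval_C, eval_X, mul_add, ← Algebra.commutes, ← Algebra.smul_def,
    add_assoc, ← add_smul, show t * lam x + -lam x * t = 0 by ring, zero_smul, add_zero]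

end PolyReducible

section Reduction

variable {g : Type*} [LieRing g] [LieAlgebra ℝ g] {h : LieSubalgebra ℝ g} {lam : h →ₗ[ℝ] ℝ}
  {q : Submodule ℝ g} {m : ℕ} {bq : Module.Basis (Fin m) ℝ q}

variable (bq) in
lemma span_lieSubalgebra_union_range_basis_eq_top (hcompl : IsCompl (h : Submodule ℝ g) q) :
    Submodule.span ℝ ((h : Set g) ∪ Set.range fun i => (bq i : g)) = ⊤ := by
  have hq : Submodule.span ℝ (Set.range fun i => (bq i : g)) = q := by
    rw [Set.range_comp' Subtype.val bq, ← Submodule.coe_subtype, Submodule.span_image, bq.span_eq,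
      Submodule.map_subtype_top]
  rw [Submodule.span_union, hq, ← hcompl.sup_eq_top]
  congr 1
  exact Submodule.span_eq (h : Submodule ℝ g)

/-- Either a letter of `h` is moved to the right end, where it acts by the scalar `-tλ`, or the
word is symmetrized; both cost only shorter words. -/
lemma wordProd_mem_polyReducible {n : ℕ} (ih : degreeLT ℝ g n ≤ polyReducible h lam bq)
    {v : List g} (hv : ∀ x ∈ v, x ∈ (h : Set g) ∪ Set.range fun i => (bq i : g))
    (hlen : v.length ≤ n) : wordProd ℝ v ∈ polyReducible h lam bq := by
  classical
  by_cases hvh : ∃ x ∈ v, x ∈ h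
  · obtain ⟨x, hxv, hxh⟩ := hvh
    have hperm : v.Perm (v.erase x ++ [x]) :=
      (List.perm_cons_erase hxv).trans (List.perm_append_singleton _ _).symm
    have hlen' : (v.erase x).length < n := by
      rw [List.length_erase_of_mem hxv]
      have := List.length_pos_of_mem hxv
      omega
    rw [← sub_add_cancel (wordProd ℝ v) (wordProd ℝ (v.erase x ++ [x]))]
    refine add_mem (ih (degreeLT_mono hlen (wordProd_sub_mem_degreeLT_of_perm hperm))) ?_
    simpa [wordProd_append] using
      mul_ι_mem_polyReducible (ih (wordProd_mem_degreeLT hlen')) ⟨x, hxh⟩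
  · push Not at hvh
    have hvq : v ∈ Set.range (List.map fun i => (bq i : g)) := by
      rw [Set.range_list_map]
      exact fun x hx => (hv x hx).resolve_left (hvh x hx)
    obtain ⟨w, rfl⟩ := hvq
    rw [← sub_add_cancel (wordProd ℝ _)
      (symmBeta bq (MvPolynomial.monomial (Multiset.toFinsupp (w : Multiset (Fin m))) 1))]
    refine add_mem (ih (degreeLT_mono ?_ (wordProd_sub_symmBeta_mem_degreeLT bq w)))
      (const_symmBeta_mem_polyReducibleFamilies _)
    simpa using hlen

lemma degreeLT_le_polyReducible (hcompl : IsCompl (h : Submodule ℝ g) q) (n : ℕ) :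
    degreeLT ℝ g n ≤ polyReducible h lam bq := by
  induction n with
  | zero =>
    refine Submodule.span_le.mpr ?_
    rintro _ ⟨w, hw, -⟩
    exact absurd hw (Nat.not_lt_zero _)
  | succ n ih =>
    refine Submodule.span_le.mpr ?_
    rintro _ ⟨u, hu, rfl⟩
    refine Submodule.span_le.mpr ?_
      (wordProd_mem_span_of_span_eq_top (span_lieSubalgebra_union_range_basis_eq_top bq hcompl) u)
    rintro _ ⟨v, hvu, hv, rfl⟩
    exact wordProd_mem_polyReducible ih hv (by omega)

lemma polyReducible_eq_top (hcompl : IsCompl (h : Submodule ℝ g) q) :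
    polyReducible h lam bq = ⊤ := by
  rw [eq_top_iff, ← span_range_wordProd (R := ℝ), Submodule.span_le]
  rintro _ ⟨w, rfl⟩
  exact degreeLT_le_polyReducible hcompl _ (wordProd_mem_degreeLT w.length.lt_succ_self)

end Reduction

section Evaluation

open Polynomial

attribute [local instance] LieRing.ofAssociativeRing

variable {g : Type*} [LieRing g] [LieAlgebra ℝ g]

variable (g) in
def ιPolynomial : (g × ℝ) →ₗ⁅ℝ⁆ (UniversalEnvelopingAlgebra ℝ g)[X] where
  toFun x := C (ι ℝ x.1) + x.2 • X
  map_add' x y := by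
    simp only [Prod.fst_add, Prod.snd_add, map_add, add_smul]
    abel
  map_smul' r x := by
    simp only [Prod.smul_fst, Prod.smul_snd, map_smul, smul_eq_mul, mul_smul, smul_add,
      RingHom.id_apply, smul_C]
  map_lie' {x y} := by
    show C (ι ℝ ⁅x.1, y.1⁆) + (0 : ℝ) • X = _
    rw [zero_smul, add_zero, LieHom.map_lie, Ring.lie_def, map_sub, map_mul, map_mul,
      Ring.lie_def]
    simp only [mul_add, add_mul, smul_mul_assoc, mul_smul_comm, X_mul, smul_add, smul_smul,
      mul_comm y.2 x.2]
    abel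

def evalCentral (t : ℝ) :
    (UniversalEnvelopingAlgebra ℝ g)[X] →ₐ[ℝ] UniversalEnvelopingAlgebra ℝ g :=
  eval₂AlgHom (AlgHom.id ℝ _) (algebraMap ℝ _ t) fun a =>
    show Commute _ _ from (Algebra.commutes t a).symm

lemma eq_evalCentral_comp_lift (t : ℝ)
    (φ : UniversalEnvelopingAlgebra ℝ (g × ℝ) →ₐ[ℝ] UniversalEnvelopingAlgebra ℝ g)
    (hφ : ∀ (x : g) (s : ℝ), φ (ι ℝ ((x, s) : g × ℝ)) =
      ι ℝ x + algebraMap ℝ (UniversalEnvelopingAlgebra ℝ g) (s * t)) :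
    φ = (evalCentral t).comp (lift ℝ (ιPolynomial g)) := by
  apply hom_ext
  refine LieHom.ext fun x => ?_
  show φ (ι ℝ x) = evalCentral t (lift ℝ (ιPolynomial g) (ι ℝ x))
  rw [lift_ι_apply, hφ]
  simp [ιPolynomial, evalCentral, Algebra.smul_def]

lemma evalCentral_eq_sum (t : ℝ) (P : (UniversalEnvelopingAlgebra ℝ g)[X]) :
    evalCentral t P = ∑ j ∈ P.support, t ^ j • P.coeff j := by
  rw [evalCentral, eval₂AlgHom_apply, eval₂_eq_sum, Polynomial.sum_def]
  refine Finset.sum_congr rfl fun j _ => ?_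
  simp [← map_pow, Algebra.smul_def, Algebra.commutes]

variable {h : LieSubalgebra ℝ g} {lam : h →ₗ[ℝ] ℝ} {q : Submodule ℝ g} {m : ℕ}
  {bq : Module.Basis (Fin m) ℝ q}

lemma evalCentral_mem_polyReducibleFamilies (hcompl : IsCompl (h : Submodule ℝ g) q)
    (P : (UniversalEnvelopingAlgebra ℝ g)[X]) :
    (fun t => evalCentral t P) ∈ polyReducibleFamilies h lam bq := by
  have hsum : (fun t => evalCentral t P) =
      ∑ j ∈ P.support, fun t => t ^ j • P.coeff j := by
    ext t
    rw [evalCentral_eq_sum, Finset.sum_apply]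
  rw [hsum]
  refine Submodule.sum_mem _ fun j _ => ?_
  have hcoeff : P.coeff j ∈ polyReducible h lam bq :=
    polyReducible_eq_top hcompl ▸ Submodule.mem_top
  simpa using polynomial_smul_mem_polyReducibleFamilies (X ^ j) (mem_polyReducible.mp hcoeff)

end Evaluation

theorem stmt12_general (g : Type*) [LieRing g] [LieAlgebra ℝ g]
    (h : LieSubalgebra ℝ g) (lam : h →ₗ[ℝ] ℝ)
    (q : Submodule ℝ g) (hcompl : IsCompl (h : Submodule ℝ g) q)
    {m : ℕ} (bq : Module.Basis (Fin m) ℝ q)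
    (uT : UniversalEnvelopingAlgebra ℝ (g × ℝ)) :
    ∃ c : (Fin m →₀ ℕ) →₀ Polynomial ℝ,
      ∀ t : ℝ,
        ∀ φ : UniversalEnvelopingAlgebra ℝ (g × ℝ) →ₐ[ℝ] UniversalEnvelopingAlgebra ℝ g,
          (∀ (x : g) (s : ℝ), φ (ι ℝ ((x, s) : g × ℝ)) =
              ι ℝ x + algebraMap ℝ (UniversalEnvelopingAlgebra ℝ g) (s * t)) →
          φ uT - symmBeta bq (c.sum fun d p => MvPolynomial.monomial d (Polynomial.eval t p))
            ∈ envIdealt g h lam t := by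
  obtain ⟨c, hc⟩ := evalCentral_mem_polyReducibleFamilies (lam := lam) (bq := bq) hcompl
    (lift ℝ (ιPolynomial g) uT)
  refine ⟨AddMonoidAlgebra.coeff c, fun t φ hφ => ?_⟩
  rw [sum_monomial_eval_eq_map, eq_evalCentral_comp_lift t φ hφ]
  exact hc t

/-- For `u_T ∈ (U(g_T)/U(g_T)h^T_λ)^h`, the family `t ↦ u_t = e_{(T=t)}(u_T)` is polynomial
in `t`: under the PBW identifications `U(g)/U(g)h_{tλ} ≃ S(q)`, the coefficients of `u_t` are
polynomial functions of `t`. -/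
theorem stmt12 (g : Type*) [LieRing g] [LieAlgebra ℝ g] [Module.Finite ℝ g]
    (h : LieSubalgebra ℝ g) (lam : h →ₗ[ℝ] ℝ) (hlam : ∀ X Y : h, lam ⁅X, Y⁆ = 0)
    (q : Submodule ℝ g) (hcompl : IsCompl (h : Submodule ℝ g) q)
    {m : ℕ} (bq : Module.Basis (Fin m) ℝ q)
    (uT : UniversalEnvelopingAlgebra ℝ (g × ℝ))
    (huT : ∀ H : h, ι ℝ (((H : g), 0) : g × ℝ) * uT - uT * ι ℝ (((H : g), 0) : g × ℝ)
        ∈ envIdealT g h lam) :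
    ∃ c : (Fin m →₀ ℕ) →₀ Polynomial ℝ,
      ∀ t : ℝ,
        ∀ φ : UniversalEnvelopingAlgebra ℝ (g × ℝ) →ₐ[ℝ] UniversalEnvelopingAlgebra ℝ g,
          (∀ (x : g) (s : ℝ), φ (ι ℝ ((x, s) : g × ℝ)) =
              ι ℝ x + algebraMap ℝ (UniversalEnvelopingAlgebra ℝ g) (s * t)) →
          φ uT - symmBeta bq (c.sum fun d p => MvPolynomial.monomial d (Polynomial.eval t p))
            ∈ envIdealt g h lam t :=
  stmt12_general g h lam q hcompl bq uT
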